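/- arXiv:2309.07709 — 4 statements merged into one kernel-verified Lean document; each statement's English description precedes it below -/
import Mathlib

section
/- Fix n ≥ 1, an index i₀ ∈ Fin n, a vector v : Fin n → ℝ with v i₀ = 1, weights ε : Fin n → ℝ with ε i₀ = 0 and ε i > 0 for all i ≠ i₀, and a constant k ∈ ℝ. Then the function W : (Fin n → ℝ) → ℝ given by W(μ) = (∑ᵢ v i · μ i + k)² + ∑ᵢ ε i · (μ i)² is strictly convex on ℝⁿ. -/
open scoped BigOperators

/-- Lemma 3 of the paper (strict-convexity part): the QP objective
`W μ = (∑ i, v i * μ i + k)² + ∑ i, ε i * (μ i)²` is strictly convex on `ℝⁿ`. -/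
theorem stmt_3 (n : ℕ) (hn : 1 ≤ n) (i₀ : Fin n)
    (v ε : Fin n → ℝ) (hv : v i₀ = 1) (hε₀ : ε i₀ = 0)
    (hε : ∀ i : Fin n, i ≠ i₀ → 0 < ε i) (k : ℝ) :
    StrictConvexOn ℝ Set.univ
      (fun μ : Fin n → ℝ => (∑ i, v i * μ i + k) ^ 2 + ∑ i, ε i * (μ i) ^ 2) := by
  have key : ∀ a b x y : ℝ, 0 < a → 0 < b → a + b = 1 →
      (a * x + b * y) ^ 2 ≤ a * x ^ 2 + b * y ^ 2 := by
    intro a b x y ha hb hab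
    nlinarith [sq_nonneg (x - y), mul_pos ha hb, mul_nonneg (mul_pos ha hb).le (sq_nonneg (x - y))]
  have keys : ∀ a b x y : ℝ, 0 < a → 0 < b → a + b = 1 → x ≠ y →
      (a * x + b * y) ^ 2 < a * x ^ 2 + b * y ^ 2 := by
    intro a b x y ha hb hab hxy
    have h : (0:ℝ) < (x - y) ^ 2 := by have := sub_ne_zero.mpr hxy; positivity
    nlinarith [mul_pos (mul_pos ha hb) h]
  have hεnn : ∀ i, 0 ≤ ε i := by
    intro i
    by_cases hi : i = i₀
    · simp [hi, hε₀]
    · exact (hε i hi).le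
  refine ⟨convex_univ, ?_⟩
  intro x _ y _ hxy a b ha hb hab
  simp only [Pi.add_apply, Pi.smul_apply, smul_eq_mul]
  have hL : (∑ i, v i * (a * x i + b * y i) + k)
      = a * (∑ i, v i * x i + k) + b * (∑ i, v i * y i + k) := by
    have h1 : ∀ i ∈ Finset.univ, v i * (a * x i + b * y i)
        = a * (v i * x i) + b * (v i * y i) := fun i _ => by ring
    rw [Finset.sum_congr rfl h1, Finset.sum_add_distrib, ← Finset.mul_sum, ← Finset.mul_sum]
    linear_combination (-k) * hab
  rw [hL]
  have hSle : ∀ i ∈ Finset.univ, ε i * (a * x i + b * y i) ^ 2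
      ≤ a * (ε i * x i ^ 2) + b * (ε i * y i ^ 2) := by
    intro i _
    calc ε i * (a * x i + b * y i) ^ 2 ≤ ε i * (a * (x i) ^ 2 + b * (y i) ^ 2) :=
          mul_le_mul_of_nonneg_left (key a b (x i) (y i) ha hb hab) (hεnn i)
      _ = a * (ε i * x i ^ 2) + b * (ε i * y i ^ 2) := by ring
  by_cases hcase : ∃ j, j ≠ i₀ ∧ x j ≠ y j
  · obtain ⟨j, hj, hxyj⟩ := hcase
    have hsum : (∑ i, ε i * (a * x i + b * y i) ^ 2)
        < ∑ i, (a * (ε i * x i ^ 2) + b * (ε i * y i ^ 2)) := by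
      refine Finset.sum_lt_sum hSle ⟨j, Finset.mem_univ j, ?_⟩
      calc ε j * (a * x j + b * y j) ^ 2
          < ε j * (a * (x j) ^ 2 + b * (y j) ^ 2) := by
            exact mul_lt_mul_of_pos_left (keys a b (x j) (y j) ha hb hab hxyj) (hε j hj)
        _ = a * (ε j * x j ^ 2) + b * (ε j * y j ^ 2) := by ring
    have hsq := key a b (∑ i, v i * x i + k) (∑ i, v i * y i + k) ha hb hab
    rw [Finset.sum_add_distrib, ← Finset.mul_sum, ← Finset.mul_sum] at hsum
    calc (a * (∑ i, v i * x i + k) + b * (∑ i, v i * y i + k)) ^ 2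
          + ∑ i, ε i * (a * x i + b * y i) ^ 2
        < (a * (∑ i, v i * x i + k) ^ 2 + b * (∑ i, v i * y i + k) ^ 2)
          + (a * ∑ i, ε i * x i ^ 2 + b * ∑ i, ε i * y i ^ 2) :=
          add_lt_add_of_le_of_lt hsq hsum
      _ = a * ((∑ i, v i * x i + k) ^ 2 + ∑ i, ε i * x i ^ 2)
          + b * ((∑ i, v i * y i + k) ^ 2 + ∑ i, ε i * y i ^ 2) := by ring
  · push_neg at hcase
    have hx0 : x i₀ ≠ y i₀ := by
      intro h
      apply hxy
      funext j
      by_cases hj : j = i₀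
      · rw [hj]; exact h
      · exact hcase j hj
    have hLne : (∑ i, v i * x i + k) ≠ (∑ i, v i * y i + k) := by
      intro h
      apply hx0
      have hd : (∑ i, v i * x i) - (∑ i, v i * y i) = x i₀ - y i₀ := by
        rw [← Finset.sum_sub_distrib]
        rw [Finset.sum_eq_single i₀]
        · rw [hv]; ring
        · intro j _ hj
          rw [hcase j hj]; ring
        · intro h'; exact absurd (Finset.mem_univ i₀) h'
      have : (∑ i, v i * x i) = (∑ i, v i * y i) := by linarith [add_right_cancel h]
      have := hd
      rw [‹(∑ i, v i * x i) = _›] at this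
      linarith
    have hsq := keys a b (∑ i, v i * x i + k) (∑ i, v i * y i + k) ha hb hab hLne
    have hsum : (∑ i, ε i * (a * x i + b * y i) ^ 2)
        ≤ ∑ i, (a * (ε i * x i ^ 2) + b * (ε i * y i ^ 2)) := Finset.sum_le_sum hSle
    rw [Finset.sum_add_distrib, ← Finset.mul_sum, ← Finset.mul_sum] at hsum
    calc (a * (∑ i, v i * x i + k) + b * (∑ i, v i * y i + k)) ^ 2
          + ∑ i, ε i * (a * x i + b * y i) ^ 2
        < (a * (∑ i, v i * x i + k) ^ 2 + b * (∑ i, v i * y i + k) ^ 2)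
          + (a * ∑ i, ε i * x i ^ 2 + b * ∑ i, ε i * y i ^ 2) :=
          add_lt_add_of_lt_of_le hsq hsum
      _ = a * ((∑ i, v i * x i + k) ^ 2 + ∑ i, ε i * x i ^ 2)
          + b * ((∑ i, v i * y i + k) ^ 2 + ∑ i, ε i * y i ^ 2) := by ring
end

section
/- Let n ≥ 1, g, b̲, b̄ : Fin n → ℝ with b̲ i < 0 < b̄ i for every i, let κ_B : ℝ → ℝ be κ-like (continuous, non-decreasing, vanishing exactly at 0), and let β > 0. Define b* : Fin n → ℝ by b* i = b̲ i if g i < 0 and b* i = b̄ i otherwise. Then: (1) μ = 0 is strictly feasible, i.e. ∑ᵢ g i · 0 = 0 > −κ_B(β) and b̲ i < 0 < b̄ i for all i; and (2) ∑ᵢ g i · b* i ≥ −κ_B(β), so the feasibility condition of the QP holds. -/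
open scoped BigOperators

/-- Proposition 4 of the paper: with `b̲ < 0 < b̄`, `κ_B` κ-like and `β = B(q) > 0`,
the point `μ = 0` is strictly feasible for the controller QP, and the feasibility
condition `∑ i, g i * b* i ≥ -κ_B β` holds. -/
theorem stmt_6 (n : ℕ) (hn : 1 ≤ n) (g blo bhi : Fin n → ℝ)
    (hbox : ∀ i, blo i < 0 ∧ 0 < bhi i)
    (κB : ℝ → ℝ) (hκ_cont : Continuous κB) (hκ_mono : Monotone κB)
    (hκ_zero : ∀ ξ : ℝ, κB ξ = 0 ↔ ξ = 0)
    (β : ℝ) (hβ : 0 < β)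
    (bstar : Fin n → ℝ)
    (hbstar : ∀ i, bstar i = if g i < 0 then blo i else bhi i) :
    ((∑ i, g i * (0:ℝ)) = 0 ∧ -κB β < 0 ∧ ∀ i, blo i < 0 ∧ 0 < bhi i) ∧
    ∑ i, g i * bstar i ≥ -κB β := by
  have hκ0 : κB 0 = 0 := (hκ_zero 0).mpr rfl
  have hκβ : 0 < κB β := by
    have h1 : κB 0 ≤ κB β := hκ_mono hβ.le
    rcases lt_or_eq_of_le (hκ0 ▸ h1) with h | h
    · exact h
    · exact absurd ((hκ_zero β).mp h.symm) hβ.ne'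
  refine ⟨⟨by simp, by linarith, hbox⟩, ?_⟩
  have hsum : (0:ℝ) ≤ ∑ i, g i * bstar i := by
    apply Finset.sum_nonneg
    intro i _
    rw [hbstar i]
    rcases lt_or_ge (g i) 0 with h | h
    · rw [if_pos h]
      exact le_of_lt (mul_pos_of_neg_of_neg h (hbox i).1)
    · rw [if_neg (not_lt.mpr h)]
      exact mul_nonneg h (hbox i).2.le
  linarith
end

section
/- Fix n ≥ 1, an index i₀ ∈ Fin n, a vector v : Fin n → ℝ with v i₀ = 1, weights ε : Fin n → ℝ with ε i₀ = 0 and ε i > 0 for all i ≠ i₀, and a constant k ∈ ℝ. Define W(μ) = (∑ᵢ v i · μ i + k)² + ∑ᵢ ε i · (μ i)². Let S ⊆ (Fin n → ℝ) be any set with 0 ∈ S, and suppose μ* ∈ S satisfies W(μ*) ≤ W(μ) for all μ ∈ S. Then k · (∑ᵢ v i · μ* i) ≤ −(1/2)·((∑ᵢ v i · μ* i)² + ∑ᵢ ε i · (μ* i)²) ≤ 0, and k · (∑ᵢ v i · μ* i) = 0 if and only if μ* = 0. -/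
open scoped BigOperators

/-- Proposition 7 of the paper: if `0 ∈ S` and `μ*` minimizes the QP objective
`W μ = (∑ i, v i * μ i + k)² + ∑ i, ε i * (μ i)²` over `S`, then
`k * (∑ i, v i * μ* i) ≤ -(1/2)((∑ i, v i * μ* i)² + ∑ i, ε i * (μ* i)²) ≤ 0`, with
`k * (∑ i, v i * μ* i) = 0` iff `μ* = 0`. -/
theorem stmt_8 (n : ℕ) (hn : 1 ≤ n) (i₀ : Fin n)
    (v ε : Fin n → ℝ) (hv : v i₀ = 1) (hε₀ : ε i₀ = 0)
    (hε : ∀ i : Fin n, i ≠ i₀ → 0 < ε i) (k : ℝ)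
    (W : (Fin n → ℝ) → ℝ)
    (hW : ∀ μ, W μ = (∑ i, v i * μ i + k) ^ 2 + ∑ i, ε i * (μ i) ^ 2)
    (S : Set (Fin n → ℝ)) (h0S : (0 : Fin n → ℝ) ∈ S)
    (μs : Fin n → ℝ) (hμs : μs ∈ S) (hmin : ∀ μ ∈ S, W μs ≤ W μ) :
    k * (∑ i, v i * μs i) ≤
        -(1/2) * ((∑ i, v i * μs i) ^ 2 + ∑ i, ε i * (μs i) ^ 2) ∧
    -(1/2) * ((∑ i, v i * μs i) ^ 2 + ∑ i, ε i * (μs i) ^ 2) ≤ 0 ∧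
    (k * (∑ i, v i * μs i) = 0 ↔ μs = 0) := by
  set s : ℝ := ∑ i, v i * μs i with hs
  set Q : ℝ := ∑ i, ε i * (μs i) ^ 2 with hQ
  have hεnn : ∀ i : Fin n, 0 ≤ ε i := by
    intro i
    by_cases h : i = i₀
    · simp [h, hε₀]
    · exact (hε i h).le
  have hQnn : 0 ≤ Q := Finset.sum_nonneg fun i _ =>
    mul_nonneg (hεnn i) (sq_nonneg _)
  have hle := hmin 0 h0S
  rw [hW, hW] at hle
  have hle' : (s + k) ^ 2 + Q ≤ k ^ 2 := by
    simpa [hs, hQ] using hle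
  have key : k * s ≤ -(1/2) * (s ^ 2 + Q) := by nlinarith [hle']
  refine ⟨key, by nlinarith [sq_nonneg s], ?_⟩
  constructor
  · intro h
    have hzero : s ^ 2 + Q = 0 := by nlinarith [sq_nonneg s]
    have hQ0 : Q = 0 := by nlinarith [sq_nonneg s]
    have hμ0 : ∀ i : Fin n, i ≠ i₀ → μs i = 0 := by
      intro i hi
      have := (Finset.sum_eq_zero_iff_of_nonneg
        (fun j _ => mul_nonneg (hεnn j) (sq_nonneg (μs j)))).1 hQ0 i (Finset.mem_univ i)
      have := mul_eq_zero.1 this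
      rcases this with h' | h'
      · exact absurd h' (hε i hi).ne'
      · exact pow_eq_zero_iff (n := 2) (by norm_num) |>.1 h'
    have hs0 : s = 0 := by nlinarith [sq_nonneg s, hQ0]
    have hsum : s = μs i₀ := by
      rw [hs]
      rw [Finset.sum_eq_single i₀]
      · rw [hv, one_mul]
      · intro j _ hj; rw [hμ0 j hj, mul_zero]
      · intro h; exact absurd (Finset.mem_univ i₀) h
    funext i
    by_cases hi : i = i₀
    · simp [hi, ← hsum, hs0]
    · simp [hμ0 i hi]
  · intro h
    simp [h, hs]
end

section
/- Let n ≥ 1 and fix an index i₀ ∈ Fin n. Let v, w, a, μ, λ̲, λ̄, b̲, b̄ : Fin n → ℝ, E : Fin n → ℝ, and scalars k ∈ ℝ, λ ≥ 0, c > 0 satisfy: v i₀ = 1 and w i₀ = 1; a i₀ = 0; E i₀ = 0 and E i > 0 for all i ≠ i₀; v i − w i = c · a i for all i; λ̲ i₀ = λ̄ i₀ = 0; λ̲ i ≥ 0 and λ̄ i ≥ 0 for all i; b̲ i < 0 < b̄ i for all i; complementarity (μ i − b̲ i)·λ̲ i = 0 and (b̄ i − μ i)·λ̄ i = 0 for all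 i; and the stationarity equation (∑ⱼ v j · μ j + k)·v i − λ·w i − λ̲ i + λ̄ i + E i · μ i = 0 for all i. Then λ = ∑ⱼ v j · μ j + k, c·λ·(∑ᵢ a i · μ i) ≤ −∑ᵢ E i · (μ i)², the inner product ∑ᵢ a i · μ i is ≤ 0, and ∑ᵢ a i · μ i = 0 if and only if μ i = 0 for every i ≠ i₀. -/
open scoped BigOperators

/-- Algebraic core of Proposition 8 of the paper (KKT analysis of the controller QP):
under the stationarity, complementarity, dual-feasibility and structural hypotheses,
one deduces `λ = ∑ j, v j * μ j + k`, the inequality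
`c * λ * (∑ i, a i * μ i) ≤ -∑ i, E i * (μ i)²`, that `∑ i, a i * μ i ≤ 0`, and that
`∑ i, a i * μ i = 0` iff all components of `μ` except the `i₀`-th vanish. -/
theorem stmt_12 (n : ℕ) (hn : 1 ≤ n) (i₀ : Fin n)
    (v w a μ lamlo lamhi blo bhi E : Fin n → ℝ)
    (k lam c : ℝ)
    (hv : v i₀ = 1) (hw : w i₀ = 1) (ha : a i₀ = 0)
    (hE₀ : E i₀ = 0) (hE : ∀ i : Fin n, i ≠ i₀ → 0 < E i)
    (hvw : ∀ i, v i - w i = c * a i)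
    (hlamlo₀ : lamlo i₀ = 0) (hlamhi₀ : lamhi i₀ = 0)
    (hlamlo : ∀ i, 0 ≤ lamlo i) (hlamhi : ∀ i, 0 ≤ lamhi i)
    (hlam : 0 ≤ lam) (hc : 0 < c)
    (hbox : ∀ i, blo i < 0 ∧ 0 < bhi i)
    (hcomp_lo : ∀ i, (μ i - blo i) * lamlo i = 0)
    (hcomp_hi : ∀ i, (bhi i - μ i) * lamhi i = 0)
    (hstat : ∀ i, (∑ j, v j * μ j + k) * v i - lam * w i - lamlo i + lamhi i
        + E i * μ i = 0) :
    lam = ∑ j, v j * μ j + k ∧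
    c * lam * (∑ i, a i * μ i) ≤ -∑ i, E i * (μ i) ^ 2 ∧
    (∑ i, a i * μ i) ≤ 0 ∧
    ((∑ i, a i * μ i) = 0 ↔ ∀ i : Fin n, i ≠ i₀ → μ i = 0) := by
  -- λ = S
  have hlameq : lam = ∑ j, v j * μ j + k := by
    have h := hstat i₀
    rw [hv, hw, hlamlo₀, hlamhi₀, hE₀] at h
    linarith
  -- per-index identity
  have hid : ∀ i, lam * (c * a i) = lamlo i - lamhi i - E i * μ i := by
    intro i
    have h := hstat i
    rw [← hlameq] at h
    have h2 := hvw i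
    linear_combination h - lam * h2
  have hlo : ∀ i, μ i * lamlo i ≤ 0 := by
    intro i
    rcases (hlamlo i).eq_or_lt with h0 | hpos
    · rw [← h0]; simp
    · have hμ : μ i = blo i := by
        rcases mul_eq_zero.mp (hcomp_lo i) with h | h
        · linarith
        · exact absurd h (ne_of_gt hpos)
      rw [hμ]
      nlinarith [(hbox i).1, hlamlo i]
  have hhi : ∀ i, 0 ≤ μ i * lamhi i := by
    intro i
    rcases (hlamhi i).eq_or_lt with h0 | hpos
    · rw [← h0]; simp
    · have hμ : μ i = bhi i := by
        rcases mul_eq_zero.mp (hcomp_hi i) with h | h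
        · linarith
        · exact absurd h (ne_of_gt hpos)
      rw [hμ]
      nlinarith [(hbox i).2, hlamhi i]
  have hEnn : ∀ i, 0 ≤ E i := by
    intro i
    by_cases hi : i = i₀
    · rw [hi, hE₀]
    · exact (hE i hi).le
  have key : c * lam * (∑ i, a i * μ i)
      = (∑ i, (μ i * lamlo i - μ i * lamhi i)) - ∑ i, E i * (μ i) ^ 2 := by
    rw [Finset.mul_sum, ← Finset.sum_sub_distrib]
    refine Finset.sum_congr rfl fun i _ => ?_
    linear_combination μ i * hid i
  have hsumE : 0 ≤ ∑ i, E i * (μ i) ^ 2 :=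
    Finset.sum_nonneg fun i _ => mul_nonneg (hEnn i) (sq_nonneg _)
  have hsumlo : (∑ i, (μ i * lamlo i - μ i * lamhi i)) ≤ 0 :=
    Finset.sum_nonpos fun i _ => by linarith [hlo i, hhi i]
  have h2 : c * lam * (∑ i, a i * μ i) ≤ -∑ i, E i * (μ i) ^ 2 := by
    rw [key]; linarith
  have hback : (∀ i : Fin n, i ≠ i₀ → μ i = 0) → (∑ i, a i * μ i) = 0 := by
    intro h
    refine Finset.sum_eq_zero fun i _ => ?_
    by_cases hi : i = i₀
    · rw [hi, ha]; ring
    · rw [h i hi]; ring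
  rcases hlam.eq_or_lt with h0 | hpos
  · -- lam = 0 case
    have hμ0 : ∀ i : Fin n, i ≠ i₀ → μ i = 0 := by
      intro i hi
      have h := hid i
      rw [← h0] at h
      have heq : E i * (μ i * μ i) = μ i * lamlo i - μ i * lamhi i := by
        linear_combination (μ i) * h
      have hEμ : E i * (μ i * μ i) ≤ 0 := by linarith [hlo i, hhi i]
      have hsq : μ i * μ i ≤ 0 := by
        by_contra hpos'
        push_neg at hpos'
        nlinarith [hE i hi]
      exact mul_self_eq_zero.mp (le_antisymm hsq (mul_self_nonneg _))
    have hsz := hback hμ0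
    exact ⟨hlameq, h2, hsz.le, ⟨fun _ => hμ0, fun _ => hsz⟩⟩
  · -- lam > 0 case
    have h3 : (∑ i, a i * μ i) ≤ 0 := by
      by_contra h
      push_neg at h
      nlinarith [mul_pos hc hpos]
    refine ⟨hlameq, h2, h3, ?_, hback⟩
    intro hz
    have hEz : ∑ i, E i * (μ i) ^ 2 = 0 := by
      rw [hz] at h2
      simp at h2
      linarith
    have hterm := (Finset.sum_eq_zero_iff_of_nonneg
      (fun i _ => mul_nonneg (hEnn i) (sq_nonneg (μ i)))).mp hEz
    intro i hi
    have := hterm i (Finset.mem_univ i)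
    have hEi := hE i hi
    have : (μ i) ^ 2 = 0 := by
      rcases mul_eq_zero.mp this with h | h
      · exact absurd h (ne_of_gt hEi)
      · exact h
    exact pow_eq_zero_iff (by norm_num) |>.mp this
end
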